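/- arXiv:0906.5527 — 3 statements merged into one kernel-verified Lean document; each statement's English description precedes it below -/
import Mathlib

section
/- Let n be a positive integer, let (X, d) be a metric space equipped with a Borel measure μ, and let κ, r, Λ > 0 and 0 < ε ≤ r^{n+2}. Assume X is κ-noncollapsed on the scale r, i.e. every open ball B(q, s) with 0 < s ≤ r satisfies μ(B(q, s)) ≥ κ·sⁿ. Let f : X → ℝ be a nonnegative Λ-Lipschitz function with ∫_X f² dμ ≤ ε. Then for every x ∈ X one has f(x) ≤ (1/√κ + Λ)·ε^{1/(n+2)}. -/
open MeasureTheory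

/-- Zero-order estimate (metric-measure form of Lemma 3.4):
on a `κ`-noncollapsed metric measure space, a nonnegative `Λ`-Lipschitz
function with small `L²` norm is pointwise small. -/
theorem sup_bound_of_L2_small_of_noncollapsed
    {X : Type*} [MetricSpace X] [MeasurableSpace X] [BorelSpace X]
    (μ : Measure X) (n : ℕ) (hn : 0 < n)
    (κ r Λ ε : ℝ) (hκ : 0 < κ) (hr : 0 < r) (hΛ : 0 < Λ)
    (hε : 0 < ε) (hεr : ε ≤ r ^ (n + 2))
    (hnc : ∀ (q : X) (s : ℝ), 0 < s → s ≤ r →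
      ENNReal.ofReal (κ * s ^ n) ≤ μ (Metric.ball q s))
    (f : X → ℝ) (hf0 : ∀ x, 0 ≤ f x)
    (hlip : ∀ x y, |f x - f y| ≤ Λ * dist x y)
    (hL2 : ∫⁻ x, ENNReal.ofReal ((f x) ^ 2) ∂μ ≤ ENNReal.ofReal ε) :
    ∀ x : X, f x ≤ (1 / Real.sqrt κ + Λ) * ε ^ ((1 : ℝ) / ((n : ℝ) + 2)) := by
  intro x
  by_contra hcon
  push_neg at hcon
  set δ : ℝ := ε ^ ((1 : ℝ) / ((n : ℝ) + 2)) with hδdef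
  have hn2 : (0:ℝ) < (n:ℝ) + 2 := by positivity
  have hδpos : 0 < δ := Real.rpow_pos_of_pos hε _
  have hδr : δ ≤ r := by
    have h1 : δ ≤ (r ^ (n+2) : ℝ) ^ ((1:ℝ)/((n:ℝ)+2)) :=
      Real.rpow_le_rpow hε.le hεr (by positivity)
    have h2 : ((r ^ (n+2) : ℝ)) ^ ((1:ℝ)/((n:ℝ)+2)) = r := by
      rw [← Real.rpow_natCast r (n+2), ← Real.rpow_mul hr.le]
      push_cast
      rw [mul_one_div, div_self hn2.ne', Real.rpow_one]
    rw [h2] at h1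
    exact h1
  have hδpow : δ ^ (n+2) = ε := by
    rw [hδdef, ← Real.rpow_natCast _ (n+2), ← Real.rpow_mul hε.le]
    push_cast
    rw [one_div, inv_mul_cancel₀ hn2.ne', Real.rpow_one]
  have hsκ : 0 < Real.sqrt κ := Real.sqrt_pos.2 hκ
  set c : ℝ := f x - Λ * δ with hcdef
  have hc : δ / Real.sqrt κ < c := by
    have h := hcon
    have hdiv : (1 / Real.sqrt κ) * δ = δ / Real.sqrt κ := by ring
    nlinarith [h]
  have hcpos : 0 < c := lt_trans (by positivity) hc
  have hball : ∀ y ∈ Metric.ball x δ, c ≤ f y := by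
    intro y hy
    have hd : dist x y < δ := by rw [dist_comm]; exact hy
    have h1 : f x - f y ≤ |f x - f y| := le_abs_self _
    have h2 := hlip x y
    have h3 : Λ * dist x y ≤ Λ * δ := by nlinarith
    simp only [hcdef]
    linarith
  have hfc : Continuous f := by
    have hl : LipschitzWith (Real.toNNReal Λ) f := by
      apply LipschitzWith.of_dist_le_mul
      intro a b
      rw [Real.dist_eq]
      calc |f a - f b| ≤ Λ * dist a b := hlip a b
        _ = (Real.toNNReal Λ : ℝ) * dist a b := by
            rw [Real.coe_toNNReal _ hΛ.le]
    exact hl.continuous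
  have hmeas : Measurable fun y => ENNReal.ofReal (f y ^ 2) :=
    ((hfc.pow 2).measurable).ennreal_ofReal
  have h1 : ENNReal.ofReal (c^2) * μ (Metric.ball x δ) ≤ ENNReal.ofReal ε := by
    calc ENNReal.ofReal (c^2) * μ (Metric.ball x δ)
        = ∫⁻ _ in Metric.ball x δ, ENNReal.ofReal (c^2) ∂μ := by
          rw [setLIntegral_const]
      _ ≤ ∫⁻ y in Metric.ball x δ, ENNReal.ofReal (f y ^ 2) ∂μ := by
          apply setLIntegral_mono hmeas
          intro y hy
          exact ENNReal.ofReal_le_ofReal (by nlinarith [hball y hy, hf0 y])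
      _ ≤ ∫⁻ y, ENNReal.ofReal (f y ^ 2) ∂μ := setLIntegral_le_lintegral _ _
      _ ≤ ENNReal.ofReal ε := hL2
  have h2 : ENNReal.ofReal (κ * δ^n) ≤ μ (Metric.ball x δ) := hnc x δ hδpos hδr
  have h3 : ENNReal.ofReal (c^2 * (κ * δ^n)) ≤ ENNReal.ofReal ε := by
    rw [ENNReal.ofReal_mul (by positivity)]
    exact le_trans (mul_le_mul_right h2 _) h1
  have hδlt : δ < c * Real.sqrt κ := (div_lt_iff₀ hsκ).1 hc
  have hδ2 : δ^2 < c^2 * κ := by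
    nlinarith [mul_self_lt_mul_self hδpos.le hδlt, Real.sq_sqrt hκ.le]
  have h4 : ε < c^2 * (κ * δ^n) := by
    have hεeq : ε = δ^n * δ^2 := by rw [← hδpow, pow_add]
    nlinarith [pow_pos hδpos n, mul_lt_mul_of_pos_left hδ2 (pow_pos hδpos n)]
  exact absurd h3 (not_le.2 ((ENNReal.ofReal_lt_ofReal_iff (by positivity)).2 h4))
end

section
/- Let c₁, c₂, c₃ ≥ 0 and T > 0. Let u : [0, T] → ℝ be continuous with u(t) > 0 for all t ∈ [0, T], differentiable on (0, T), and suppose that for all t ∈ (0, T): u'(t) ≥ −c₁·u(t) − (c₂/√t + c₃)·√(u(t)). Then for every t ∈ [0, T]: √(u(t)) ≥ √(u(0))·e^{−c₁ t/2} − c₂·√t − (c₃/2)·t. -/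
/-!
With `v = √u` the hypothesis becomes the linear differential inequality
`v' ≥ -(c₁/2) v - G'` for `G t = c₂ √t + (c₃/2) t`. Since `G ≥ 0`, the integrating factor
makes `t ↦ e^{c₁ t/2} (v t + G t)` monotone, and comparing its values at `0` and `t` gives
the bound.
-/

open Real Set

section IntegratingFactor

variable {k a b : ℝ} {v v' G G' : ℝ → ℝ}

theorem monotoneOn_exp_mul_mul_add_of_deriv_ge (hk : 0 ≤ k)
    (hv : ContinuousOn v (Icc a b)) (hG : ContinuousOn G (Icc a b))
    (hv' : ∀ t ∈ Ioo a b, HasDerivAt v (v' t) t) (hG' : ∀ t ∈ Ioo a b, HasDerivAt G (G' t) t)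
    (hG_nonneg : ∀ t ∈ Ioo a b, 0 ≤ G t) (h : ∀ t ∈ Ioo a b, -k * v t - G' t ≤ v' t) :
    MonotoneOn (fun t => exp (k * t) * (v t + G t)) (Icc a b) := by
  refine monotoneOn_of_hasDerivWithinAt_nonneg (convex_Icc a b)
    (f' := fun t => exp (k * t) * (k * (v t + G t) + (v' t + G' t))) ?_ ?_ ?_
  · exact (continuous_const_mul k).rexp.continuousOn.mul (hv.add hG)
  · rw [interior_Icc]
    intro t ht
    have hexp : HasDerivAt (fun s => exp (k * s)) (exp (k * t) * k) t := by
      simpa using ((hasDerivAt_id t).const_mul k).exp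
    refine ((hexp.mul ((hv' t ht).add (hG' t ht))).congr_deriv ?_).hasDerivWithinAt
    simp only [Pi.add_apply]
    ring
  · rw [interior_Icc]
    intro t ht
    have hkG : 0 ≤ k * G t := mul_nonneg hk (hG_nonneg t ht)
    exact mul_nonneg (exp_pos _).le (by linarith [h t ht])

theorem exp_mul_add_sub_le_of_deriv_ge (hk : 0 ≤ k)
    (hv : ContinuousOn v (Icc a b)) (hG : ContinuousOn G (Icc a b))
    (hv' : ∀ t ∈ Ioo a b, HasDerivAt v (v' t) t) (hG' : ∀ t ∈ Ioo a b, HasDerivAt G (G' t) t)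
    (hG_nonneg : ∀ t ∈ Ioo a b, 0 ≤ G t) (h : ∀ t ∈ Ioo a b, -k * v t - G' t ≤ v' t) :
    ∀ t ∈ Icc a b, exp (-k * (t - a)) * (v a + G a) - G t ≤ v t := by
  intro t ht
  have hmono : exp (k * a) * (v a + G a) ≤ exp (k * t) * (v t + G t) :=
    monotoneOn_exp_mul_mul_add_of_deriv_ge hk hv hG hv' hG' hG_nonneg h
      (left_mem_Icc.2 (ht.1.trans ht.2)) ht ht.1
  have hdiv : exp (-k * (t - a)) * (v a + G a) ≤ v t + G t := by
    rw [show -k * (t - a) = k * a - k * t by ring, exp_sub, div_mul_eq_mul_div,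
      div_le_iff₀ (exp_pos _), mul_comm (v t + G t)]
    exact hmono
  linarith

end IntegratingFactor

theorem neg_mul_sqrt_sub_le_div_two_mul_sqrt {c g x d : ℝ} (hx : 0 < x)
    (h : -c * x - g * √x ≤ d) : -(c / 2) * √x - g / 2 ≤ d / (2 * √x) := by
  have hs : 0 < √x := sqrt_pos.2 hx
  rw [le_div_iff₀ (by positivity)]
  calc (-(c / 2) * √x - g / 2) * (2 * √x) = -c * √x ^ 2 - g * √x := by ring
    _ = -c * x - g * √x := by rw [sq_sqrt hx.le]
    _ ≤ d := h

theorem sqrt_lower_bound_of_deriv_ineq_general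
    (c₁ c₂ c₃ T : ℝ) (hc₁ : 0 ≤ c₁) (hc₂ : 0 ≤ c₂) (hc₃ : 0 ≤ c₃)
    (u u' : ℝ → ℝ)
    (hu_cont : ContinuousOn u (Set.Icc 0 T))
    (hu_pos : ∀ t ∈ Set.Icc 0 T, 0 < u t)
    (hu_deriv : ∀ t ∈ Set.Ioo 0 T, HasDerivAt u (u' t) t)
    (hu_ineq : ∀ t ∈ Set.Ioo 0 T,
      -c₁ * u t - (c₂ / Real.sqrt t + c₃) * Real.sqrt (u t) ≤ u' t) :
    ∀ t ∈ Set.Icc 0 T,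
      Real.sqrt (u 0) * Real.exp (-c₁ * t / 2) - c₂ * Real.sqrt t - c₃ / 2 * t
        ≤ Real.sqrt (u t) := by
  have hG' : ∀ t ∈ Ioo 0 T, HasDerivAt (fun s => c₂ * √s + c₃ / 2 * s)
      (c₂ * (1 / (2 * √t)) + c₃ / 2) t := fun t ht =>
    (((hasDerivAt_sqrt ht.1.ne').const_mul c₂).add
      ((hasDerivAt_id t).const_mul (c₃ / 2))).congr_deriv (by rw [mul_one])
  have hv' : ∀ t ∈ Ioo 0 T, HasDerivAt (fun s => √(u s)) (u' t / (2 * √(u t))) t :=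
    fun t ht => (hu_deriv t ht).sqrt (hu_pos t (Ioo_subset_Icc_self ht)).ne'
  have hv_ineq : ∀ t ∈ Ioo 0 T,
      -(c₁ / 2) * √(u t) - (c₂ * (1 / (2 * √t)) + c₃ / 2) ≤ u' t / (2 * √(u t)) := by
    intro t ht
    convert neg_mul_sqrt_sub_le_div_two_mul_sqrt (hu_pos t (Ioo_subset_Icc_self ht)) (hu_ineq t ht)
      using 2
    ring
  intro t ht
  have hbound := exp_mul_add_sub_le_of_deriv_ge (by positivity) hu_cont.sqrt
    (by fun_prop) hv' hG'
    (fun s hs => add_nonneg (mul_nonneg hc₂ (sqrt_nonneg s)) (mul_nonneg (by positivity) hs.1.le))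
    hv_ineq t ht
  simp only [sqrt_zero, mul_zero, add_zero, sub_zero] at hbound
  rw [show -c₁ * t / 2 = -(c₁ / 2) * t by ring, mul_comm]
  linarith

/-- Differential-inequality core of part (1) of Lemma 3.2:
from `u' ≥ -c₁ u - (c₂/√t + c₃)√u` deduce
`√(u t) ≥ √(u 0) e^{-c₁ t/2} - c₂ √t - (c₃/2) t`. -/
theorem sqrt_lower_bound_of_deriv_ineq
    (c₁ c₂ c₃ T : ℝ) (hc₁ : 0 ≤ c₁) (hc₂ : 0 ≤ c₂) (hc₃ : 0 ≤ c₃) (hT : 0 < T)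
    (u u' : ℝ → ℝ)
    (hu_cont : ContinuousOn u (Set.Icc 0 T))
    (hu_pos : ∀ t ∈ Set.Icc 0 T, 0 < u t)
    (hu_deriv : ∀ t ∈ Set.Ioo 0 T, HasDerivAt u (u' t) t)
    (hu_ineq : ∀ t ∈ Set.Ioo 0 T,
      -c₁ * u t - (c₂ / Real.sqrt t + c₃) * Real.sqrt (u t) ≤ u' t) :
    ∀ t ∈ Set.Icc 0 T,
      Real.sqrt (u 0) * Real.exp (-c₁ * t / 2) - c₂ * Real.sqrt t - c₃ / 2 * t
        ≤ Real.sqrt (u t) :=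
  sqrt_lower_bound_of_deriv_ineq_general c₁ c₂ c₃ T hc₁ hc₂ hc₃ u u' hu_cont hu_pos hu_deriv hu_ineq
end

section
/- Let Λ, ε, γ, K₀ > 0 and T > 0. Let u : [0, T] → ℝ be continuous with u(t) > 0 for all t ∈ [0, T], differentiable on (0, T), and suppose that for all t ∈ (0, T): u'(t) ≥ −(2Λε·e^{−γt} + 2ε²·e^{−2γt})·u(t) − 2(K₀ + Λ)ε·e^{−γt}·√(u(t)). Then for every t ∈ [0, T]: √(u(t)) ≥ √(u(0))·e^{−(2Λε + ε²)/(2γ)} − (K₀ + Λ)ε/γ. -/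
/-!
With `v = √u` the hypothesis reads `v' ≥ -a v - b`, where `a = Λε e^{-γt} + ε² e^{-2γt}` and
`b = (K₀+Λ)ε e^{-γt}` are nonnegative, with primitives `F`, `B` vanishing at `0` and bounded by
`(2Λε+ε²)/(2γ)` and `(K₀+Λ)ε/γ`. For fixed `t`, `s ↦ e^{F s} v s + e^{F t} B s` is nondecreasing
on `[0, t]`, so `v 0 ≤ e^{F t} (v t + B t)`.
-/

open Real Set

noncomputable def expDecayPrimitive (γ s : ℝ) : ℝ := (1 - exp (-γ * s)) / γ

lemma hasDerivAt_expDecayPrimitive {γ : ℝ} (hγ : γ ≠ 0) (s : ℝ) :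
    HasDerivAt (expDecayPrimitive γ) (exp (-γ * s)) s := by
  refine ((((hasDerivAt_id' s).const_mul (-γ)).exp.const_sub 1).div_const γ).congr_deriv ?_
  field_simp

@[simp]
lemma expDecayPrimitive_zero (γ : ℝ) : expDecayPrimitive γ 0 = 0 := by
  simp [expDecayPrimitive]

lemma expDecayPrimitive_le_inv {γ : ℝ} (hγ : 0 < γ) (s : ℝ) : expDecayPrimitive γ s ≤ γ⁻¹ := by
  rw [expDecayPrimitive, div_le_iff₀ hγ, inv_mul_cancel₀ hγ.ne']
  linarith [exp_pos (-γ * s)]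

lemma monotone_expDecayPrimitive {γ : ℝ} (hγ : 0 < γ) : Monotone (expDecayPrimitive γ) :=
  fun s r hsr => by
    have : exp (-γ * r) ≤ exp (-γ * s) := exp_le_exp.2 (by nlinarith)
    unfold expDecayPrimitive
    gcongr

theorem exp_mul_le_exp_mul_of_deriv_ge {v v' a b F B : ℝ → ℝ} {t₀ t : ℝ} (ht : t₀ ≤ t)
    (hv : ContinuousOn v (Icc t₀ t)) (hv' : ∀ x ∈ Ioo t₀ t, HasDerivAt v (v' x) x)
    (hineq : ∀ x ∈ Ioo t₀ t, -a x * v x - b x ≤ v' x)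
    (hF : ∀ x, HasDerivAt F (a x) x) (hF_mono : MonotoneOn F (Icc t₀ t))
    (hB : ∀ x, HasDerivAt B (b x) x) (hb : ∀ x ∈ Ioo t₀ t, 0 ≤ b x) :
    exp (F t₀) * v t₀ ≤ exp (F t) * (v t + B t - B t₀) := by
  -- The source term carries the largest integrating factor `e^{F t}` rather than `e^{F s}`,
  -- so that no primitive of `e^F b` is needed.
  let h s := exp (F s) * v s + exp (F t) * B s
  have hh : ∀ x ∈ Ioo t₀ t,
      HasDerivAt h (exp (F x) * a x * v x + exp (F x) * v' x + exp (F t) * b x) x :=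
    fun x hx => ((hF x).exp.mul (hv' x hx)).add ((hB x).const_mul _)
  have hF_cont : Continuous F := continuous_iff_continuousAt.2 fun x => (hF x).continuousAt
  have hB_cont : Continuous B := continuous_iff_continuousAt.2 fun x => (hB x).continuousAt
  have h_mono : MonotoneOn h (Icc t₀ t) := by
    refine monotoneOn_of_hasDerivWithinAt_nonneg (convex_Icc t₀ t)
      ((hF_cont.rexp.continuousOn.mul hv).add (by fun_prop))
      (fun x hx => (hh x (by rwa [interior_Icc] at hx)).hasDerivWithinAt) ?_
    rw [interior_Icc]
    intro x hx
    have hFx : exp (F x) ≤ exp (F t) :=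
      exp_le_exp.2 (hF_mono (Ioo_subset_Icc_self hx) (right_mem_Icc.2 ht) hx.2.le)
    linear_combination mul_le_mul_of_nonneg_left (hineq x hx) (exp_pos (F x)).le
      + mul_le_mul_of_nonneg_left hFx (hb x hx)
  have := h_mono (left_mem_Icc.2 ht) (right_mem_Icc.2 ht) ht
  simp only [h] at this
  linarith

lemma neg_mul_sqrt_sub_le_div_of_le {u u' a b : ℝ} (hu : 0 < u)
    (h : -(2 * a) * u - 2 * b * √u ≤ u') : -a * √u - b ≤ u' / (2 * √u) := by
  have hs : 0 < √u := sqrt_pos.2 hu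
  rw [le_div_iff₀ (by positivity)]
  linear_combination h - 2 * a * sq_sqrt hu.le

theorem exp_mul_sqrt_le_exp_mul_of_deriv_ge {u u' a b F B : ℝ → ℝ} {t₀ t : ℝ} (ht : t₀ ≤ t)
    (hu : ContinuousOn u (Icc t₀ t)) (hu_pos : ∀ x ∈ Icc t₀ t, 0 < u x)
    (hu' : ∀ x ∈ Ioo t₀ t, HasDerivAt u (u' x) x)
    (hineq : ∀ x ∈ Ioo t₀ t, -(2 * a x) * u x - 2 * b x * √(u x) ≤ u' x)
    (hF : ∀ x, HasDerivAt F (a x) x) (hF_mono : MonotoneOn F (Icc t₀ t))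
    (hB : ∀ x, HasDerivAt B (b x) x) (hb : ∀ x ∈ Ioo t₀ t, 0 ≤ b x) :
    exp (F t₀) * √(u t₀) ≤ exp (F t) * (√(u t) + B t - B t₀) :=
  have hu_pos' x (hx : x ∈ Ioo t₀ t) : 0 < u x := hu_pos x (Ioo_subset_Icc_self hx)
  exp_mul_le_exp_mul_of_deriv_ge ht hu.sqrt (fun x hx => (hu' x hx).sqrt (hu_pos' x hx).ne')
    (fun x hx => neg_mul_sqrt_sub_le_div_of_le (hu_pos' x hx) (hineq x hx)) hF hF_mono hB hb

lemma mul_exp_neg_sub_le_of_le_exp_mul {v₀ v F B C D : ℝ} (hv₀ : 0 ≤ v₀)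
    (h : v₀ ≤ exp F * (v + B)) (hF : F ≤ C) (hB : B ≤ D) : v₀ * exp (-C) - D ≤ v :=
  calc v₀ * exp (-C) - D ≤ v₀ * exp (-F) - B := by gcongr
    _ ≤ v := by
      rw [exp_neg, ← div_eq_mul_inv, sub_le_iff_le_add, div_le_iff₀ (exp_pos _)]
      linarith

theorem sqrt_lower_bound_of_deriv_ineq_exp_general
    (Λ ε γ K₀ T : ℝ) (hΛ : 0 < Λ) (hε : 0 < ε) (hγ : 0 < γ) (hK₀ : 0 < K₀)
    (u u' : ℝ → ℝ)
    (hu_cont : ContinuousOn u (Set.Icc 0 T))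
    (hu_pos : ∀ t ∈ Set.Icc 0 T, 0 < u t)
    (hu_deriv : ∀ t ∈ Set.Ioo 0 T, HasDerivAt u (u' t) t)
    (hu_ineq : ∀ t ∈ Set.Ioo 0 T,
      -(2 * Λ * ε * Real.exp (-γ * t) + 2 * ε ^ 2 * Real.exp (-2 * γ * t)) * u t
        - 2 * (K₀ + Λ) * ε * Real.exp (-γ * t) * Real.sqrt (u t) ≤ u' t) :
    ∀ t ∈ Set.Icc 0 T,
      Real.sqrt (u 0) * Real.exp (-(2 * Λ * ε + ε ^ 2) / (2 * γ)) - (K₀ + Λ) * ε / γ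
        ≤ Real.sqrt (u t) := by
  rintro t ⟨ht₀, htT⟩
  have hγ₂ : 0 < 2 * γ := by positivity
  let F s := Λ * ε * expDecayPrimitive γ s + ε ^ 2 * expDecayPrimitive (2 * γ) s
  let B s := (K₀ + Λ) * ε * expDecayPrimitive γ s
  have hF s : HasDerivAt F (Λ * ε * exp (-γ * s) + ε ^ 2 * exp (-2 * γ * s)) s := by
    refine (((hasDerivAt_expDecayPrimitive hγ.ne' s).const_mul _).add
      ((hasDerivAt_expDecayPrimitive hγ₂.ne' s).const_mul _)).congr_deriv ?_
    ring_nf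
  have hF_mono : Monotone F := ((monotone_expDecayPrimitive hγ).const_mul (by positivity)).add
    ((monotone_expDecayPrimitive hγ₂).const_mul (by positivity))
  have key := exp_mul_sqrt_le_exp_mul_of_deriv_ge (B := B) ht₀
    (hu_cont.mono (Icc_subset_Icc_right htT)) (fun x hx => hu_pos x ⟨hx.1, hx.2.trans htT⟩)
    (fun x hx => hu_deriv x ⟨hx.1, hx.2.trans_le htT⟩)
    (fun x hx => by linear_combination hu_ineq x ⟨hx.1, hx.2.trans_le htT⟩)
    hF (hF_mono.monotoneOn _) (fun s => (hasDerivAt_expDecayPrimitive hγ.ne' s).const_mul _)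
    (fun x _ => by positivity)
  have hF0 : F 0 = 0 := by simp [F]
  have hB0 : B 0 = 0 := by simp [B]
  rw [hF0, hB0, exp_zero, one_mul, sub_zero] at key
  rw [neg_div]
  refine mul_exp_neg_sub_le_of_le_exp_mul (sqrt_nonneg _) key ?_ ?_
  · have := expDecayPrimitive_le_inv hγ t
    have := expDecayPrimitive_le_inv hγ₂ t
    calc F t ≤ Λ * ε * γ⁻¹ + ε ^ 2 * (2 * γ)⁻¹ := by simp only [F]; gcongr
      _ = (2 * Λ * ε + ε ^ 2) / (2 * γ) := by field_simp
  · rw [div_eq_mul_inv]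
    exact mul_le_mul_of_nonneg_left (expDecayPrimitive_le_inv hγ t) (by positivity)

/-- Differential-inequality core of part (2) of Lemma 3.2:
from `u' ≥ -(2Λε e^{-γt} + 2ε² e^{-2γt}) u - 2(K₀+Λ)ε e^{-γt} √u` deduce the
uniform-in-time lower bound
`√(u t) ≥ √(u 0) e^{-(2Λε+ε²)/(2γ)} - (K₀+Λ)ε/γ`. -/
theorem sqrt_lower_bound_of_deriv_ineq_exp
    (Λ ε γ K₀ T : ℝ) (hΛ : 0 < Λ) (hε : 0 < ε) (hγ : 0 < γ) (hK₀ : 0 < K₀) (hT : 0 < T)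
    (u u' : ℝ → ℝ)
    (hu_cont : ContinuousOn u (Set.Icc 0 T))
    (hu_pos : ∀ t ∈ Set.Icc 0 T, 0 < u t)
    (hu_deriv : ∀ t ∈ Set.Ioo 0 T, HasDerivAt u (u' t) t)
    (hu_ineq : ∀ t ∈ Set.Ioo 0 T,
      -(2 * Λ * ε * Real.exp (-γ * t) + 2 * ε ^ 2 * Real.exp (-2 * γ * t)) * u t
        - 2 * (K₀ + Λ) * ε * Real.exp (-γ * t) * Real.sqrt (u t) ≤ u' t) :
    ∀ t ∈ Set.Icc 0 T,
      Real.sqrt (u 0) * Real.exp (-(2 * Λ * ε + ε ^ 2) / (2 * γ)) - (K₀ + Λ) * ε / γ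
        ≤ Real.sqrt (u t) :=
  sqrt_lower_bound_of_deriv_ineq_exp_general Λ ε γ K₀ T hΛ hε hγ hK₀ u u' hu_cont hu_pos hu_deriv
    hu_ineq
end
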